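/- Let G, E, W ∈ ℝ^{d×k} with λ > 0 and E_{ij} > 0 for all entries. Define (ΔW*)_{ij} = G_{ij}/(1 + λE_{ij}²). Then the Frobenius inner product satisfies |⟨ΔW*, W⟩_F| ≤ (‖G‖_F / (2√λ)) · ‖E^{-1} ⊙ W‖_F, where (E^{-1} ⊙ W)_{ij} = W_{ij}/E_{ij}. -/

import Mathlib

open Finset

lemma amgm_aux (lam x : ℝ) (hlam : 0 < lam) (hx : 0 < x) :
    2 * Real.sqrt lam * x ≤ 1 + lam * x ^ 2 := by
  have h := sq_nonneg (1 - Real.sqrt lam * x)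
  have hs : Real.sqrt lam ^ 2 = lam := Real.sq_sqrt hlam.le
  nlinarith [h, hs]

/-- Interference bound: `|⟨ΔW*, W⟩_F| ≤ (‖G‖_F / (2√λ)) ‖E⁻¹ ⊙ W‖_F`. -/
theorem ella_interference_bound {d k : Type*} [Fintype d] [Fintype k]
    (G E W : Matrix d k ℝ) (lam : ℝ) (hlam : 0 < lam)
    (hE : ∀ i j, 0 < E i j)
    (ΔWstar : Matrix d k ℝ)
    (hstar : ∀ i j, ΔWstar i j = G i j / (1 + lam * (E i j) ^ 2)) :
    |∑ i, ∑ j, ΔWstar i j * W i j|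
      ≤ (Real.sqrt (∑ i, ∑ j, (G i j) ^ 2) / (2 * Real.sqrt lam))
        * Real.sqrt (∑ i, ∑ j, (W i j / E i j) ^ 2) := by
  have hsl : 0 < Real.sqrt lam := Real.sqrt_pos.mpr hlam
  set c := 2 * Real.sqrt lam with hc
  have hcpos : 0 < c := by positivity
  -- step 1: triangle inequality and pointwise bound
  have step1 : |∑ i, ∑ j, ΔWstar i j * W i j|
      ≤ (∑ i, ∑ j, |G i j| * |W i j / E i j|) / c := by
    rw [Finset.sum_div]
    simp_rw [Finset.sum_div]
    calc |∑ i, ∑ j, ΔWstar i j * W i j|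
        ≤ ∑ i, ∑ j, |ΔWstar i j * W i j| := by
          refine (Finset.abs_sum_le_sum_abs _ _).trans ?_
          exact Finset.sum_le_sum fun i _ => Finset.abs_sum_le_sum_abs _ _
      _ ≤ ∑ i, ∑ j, |G i j| * |W i j / E i j| / c := by
          refine Finset.sum_le_sum fun i _ => Finset.sum_le_sum fun j _ => ?_
          have hEij := hE i j
          have hd : 0 < 1 + lam * (E i j) ^ 2 := by positivity
          rw [hstar, abs_mul, abs_div, abs_of_pos hd, abs_div,
            abs_of_pos hEij]
          rw [div_mul_eq_mul_div, div_le_div_iff₀ hd (by positivity)]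
          have key : c * E i j ≤ 1 + lam * (E i j) ^ 2 :=
            amgm_aux lam (E i j) hlam hEij
          have h' : |W i j| / E i j * (c * E i j) = |W i j| * c := by
            field_simp
          calc |G i j| * |W i j| * c
              = |G i j| * (|W i j| / E i j * (c * E i j)) := by rw [h']; ring
            _ ≤ |G i j| * (|W i j| / E i j * (1 + lam * (E i j) ^ 2)) :=
                mul_le_mul_of_nonneg_left
                  (mul_le_mul_of_nonneg_left key (by positivity))
                  (abs_nonneg _)
            _ = |G i j| * (|W i j| / E i j) * (1 + lam * E i j ^ 2) := by ring
  -- step 2: Cauchy-Schwarz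
  set A := ∑ i, ∑ j, (G i j) ^ 2 with hA
  set B := ∑ i, ∑ j, (W i j / E i j) ^ 2 with hB
  have hA0 : 0 ≤ A := Finset.sum_nonneg fun i _ =>
    Finset.sum_nonneg fun j _ => sq_nonneg _
  have hB0 : 0 ≤ B := Finset.sum_nonneg fun i _ =>
    Finset.sum_nonneg fun j _ => sq_nonneg _
  have step2 : ∑ i, ∑ j, |G i j| * |W i j / E i j|
      ≤ Real.sqrt A * Real.sqrt B := by
    have hcs := Finset.sum_mul_sq_le_sq_mul_sq (Finset.univ : Finset (d × k))
      (fun p => |G p.1 p.2|) (fun p => |W p.1 p.2 / E p.1 p.2|)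
    have e1 : ∑ p : d × k, |G p.1 p.2| * |W p.1 p.2 / E p.1 p.2|
        = ∑ i, ∑ j, |G i j| * |W i j / E i j| := Fintype.sum_prod_type _
    have e2 : ∑ p : d × k, |G p.1 p.2| ^ 2 = A := by
      rw [hA, Fintype.sum_prod_type]; simp [sq_abs]
    have e3 : ∑ p : d × k, |W p.1 p.2 / E p.1 p.2| ^ 2 = B := by
      rw [hB, Fintype.sum_prod_type]; simp [sq_abs]
    rw [e1, e2, e3] at hcs
    have hnn : 0 ≤ ∑ i, ∑ j, |G i j| * |W i j / E i j| :=
      Finset.sum_nonneg fun i _ => Finset.sum_nonneg fun j _ =>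
        mul_nonneg (abs_nonneg _) (abs_nonneg _)
    have := Real.sqrt_le_sqrt hcs
    rwa [Real.sqrt_sq hnn, Real.sqrt_mul hA0] at this
  calc |∑ i, ∑ j, ΔWstar i j * W i j|
      ≤ (∑ i, ∑ j, |G i j| * |W i j / E i j|) / c := step1
    _ ≤ (Real.sqrt A * Real.sqrt B) / c := by gcongr
    _ = (Real.sqrt A / c) * Real.sqrt B := by ring
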